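/- The tableau system TC_SCI is terminating: for every SCI-formula φ, on any branch of a TC_SCI-tableau with a labelled formula w : φ at the root, rules are applied at most |φ| + |φ|² + 1 times, where |φ| denotes the number of occurrences of subformulas of φ; consequently every TC_SCI-tableau for φ is finite. -/

import Mathlib

/-- SCI-formulas: atoms, negation, implication, and the identity connective. -/
inductive SCIForm : Type
  | atom : ℕ → SCIForm
  | not : SCIForm → SCIForm
  | imp : SCIForm → SCIForm → SCIForm
  | idn : SCIForm → SCIForm → SCIForm
  deriving DecidableEq

/-- An SCI-structure over a carrier type `U`: a set of designated values and
operations interpreting ¬, →, ≡. -/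
structure SCIStruct (U : Type) where
  D : Set U
  neg : U → U
  imp : U → U → U
  idn : U → U → U

/-- `M` is an SCI-model: `U` is non-empty, `D` is a proper subset of `U`, and the
three semantic conditions hold. -/
def IsSCIModel {U : Type} (M : SCIStruct U) : Prop :=
  Nonempty U ∧ M.D ≠ Set.univ ∧
  (∀ a : U, M.neg a ∈ M.D ↔ a ∉ M.D) ∧
  (∀ a b : U, M.imp a b ∈ M.D ↔ (a ∉ M.D ∨ b ∈ M.D)) ∧
  (∀ a b : U, M.idn a b ∈ M.D ↔ a = b)

/-- A valuation in an SCI-structure: a homomorphism from formulas to `U`. -/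
def IsValuation {U : Type} (M : SCIStruct U) (V : SCIForm → U) : Prop :=
  (∀ φ, V (SCIForm.not φ) = M.neg (V φ)) ∧
  (∀ φ ψ, V (SCIForm.imp φ ψ) = M.imp (V φ) (V ψ)) ∧
  (∀ φ ψ, V (SCIForm.idn φ ψ) = M.idn (V φ) (V ψ))

/-- A formula is SCI-satisfiable if its denotation is designated in some
SCI-model under some valuation. -/
def SCISatisfiable (φ : SCIForm) : Prop :=
  ∃ (U : Type) (M : SCIStruct U) (V : SCIForm → U),
    IsSCIModel M ∧ IsValuation M V ∧ V φ ∈ M.D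

/-- A formula is SCI-valid if its denotation is designated in every SCI-model
under every valuation. -/
def SCIValid (φ : SCIForm) : Prop :=
  ∀ (U : Type) (M : SCIStruct U) (V : SCIForm → U),
    IsSCIModel M → IsValuation M V → V φ ∈ M.D

/-- Labels: a Boolean polarity (`true` = the set L⁺, `false` = the set L⁻)
together with a natural number index; L⁺ and L⁻ are disjoint and countably
infinite. -/
abbrev Label : Type := Bool × ℕ

/-- `w` belongs to L⁺. -/
def posL (w : Label) : Prop := w.1 = true

/-- `w` belongs to L⁻. -/
def negL (w : Label) : Prop := w.1 = false

/-- Expressions occurring on tableau branches: labelled formulas `w : φ`,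
equalities `w = v`, inequalities `w ≠ v`, and the closure symbol ⊥. -/
inductive Node : Type
  | lf : Label → SCIForm → Node
  | eq : Label → Label → Node
  | neq : Label → Label → Node
  | bot : Node
  deriving DecidableEq

/-- `|φ|`: the number of occurrences of subformulas of `φ`. -/
def SCIForm.size : SCIForm → ℕ
  | SCIForm.atom _ => 1
  | SCIForm.not φ => SCIForm.size φ + 1
  | SCIForm.imp φ ψ => SCIForm.size φ + SCIForm.size ψ + 1
  | SCIForm.idn φ ψ => SCIForm.size φ + SCIForm.size ψ + 1

/-- A label is fresh on a branch: no labelled formula on the branch carries it. -/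
def freshL (v : Label) (l : List Node) : Prop := ∀ φ, Node.lf v φ ∉ l

/-- One application of a TC_SCI rule extending a single branch.  A branch is a
list of nodes (in order of introduction, root first) together with the set `E`
of labelled formulas to which a decomposition rule has already been applied
(each decomposition rule may be applied only once to a given labelled formula,
each equality rule only if its conclusion is not yet on the branch, and no rule
is applied to a closed branch). -/
inductive Extend : List Node → Set (Label × SCIForm) → List Node → Set (Label × SCIForm) → Prop
  | negP (l : List Node) (E : Set (Label × SCIForm)) (w v : Label) (φ : SCIForm) :
      Node.bot ∉ l → posL w → Node.lf w (SCIForm.not φ) ∈ l → (w, SCIForm.not φ) ∉ E →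
      negL v → freshL v l →
      Extend l E (l ++ [Node.lf v φ]) (insert (w, SCIForm.not φ) E)
  | negN (l : List Node) (E : Set (Label × SCIForm)) (w v : Label) (φ : SCIForm) :
      Node.bot ∉ l → negL w → Node.lf w (SCIForm.not φ) ∈ l → (w, SCIForm.not φ) ∉ E →
      posL v → freshL v l →
      Extend l E (l ++ [Node.lf v φ]) (insert (w, SCIForm.not φ) E)
  | impP1 (l : List Node) (E : Set (Label × SCIForm)) (w v u : Label) (φ ψ : SCIForm) :
      Node.bot ∉ l → posL w → Node.lf w (SCIForm.imp φ ψ) ∈ l → (w, SCIForm.imp φ ψ) ∉ E →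
      negL v → negL u → v ≠ u → freshL v l → freshL u l →
      Extend l E (l ++ [Node.lf v φ, Node.lf u ψ]) (insert (w, SCIForm.imp φ ψ) E)
  | impP2 (l : List Node) (E : Set (Label × SCIForm)) (w v u : Label) (φ ψ : SCIForm) :
      Node.bot ∉ l → posL w → Node.lf w (SCIForm.imp φ ψ) ∈ l → (w, SCIForm.imp φ ψ) ∉ E →
      negL v → posL u → v ≠ u → freshL v l → freshL u l →
      Extend l E (l ++ [Node.lf v φ, Node.lf u ψ]) (insert (w, SCIForm.imp φ ψ) E)
  | impP3 (l : List Node) (E : Set (Label × SCIForm)) (w v u : Label) (φ ψ : SCIForm) :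
      Node.bot ∉ l → posL w → Node.lf w (SCIForm.imp φ ψ) ∈ l → (w, SCIForm.imp φ ψ) ∉ E →
      posL v → posL u → v ≠ u → freshL v l → freshL u l →
      Extend l E (l ++ [Node.lf v φ, Node.lf u ψ]) (insert (w, SCIForm.imp φ ψ) E)
  | impN (l : List Node) (E : Set (Label × SCIForm)) (w v u : Label) (φ ψ : SCIForm) :
      Node.bot ∉ l → negL w → Node.lf w (SCIForm.imp φ ψ) ∈ l → (w, SCIForm.imp φ ψ) ∉ E →
      posL v → negL u → v ≠ u → freshL v l → freshL u l →
      Extend l E (l ++ [Node.lf v φ, Node.lf u ψ]) (insert (w, SCIForm.imp φ ψ) E)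
  | idnP1 (l : List Node) (E : Set (Label × SCIForm)) (w v u : Label) (φ ψ : SCIForm) :
      Node.bot ∉ l → posL w → Node.lf w (SCIForm.idn φ ψ) ∈ l → (w, SCIForm.idn φ ψ) ∉ E →
      posL v → posL u → v ≠ u → freshL v l → freshL u l →
      Extend l E (l ++ [Node.lf v φ, Node.lf u ψ, Node.eq v u]) (insert (w, SCIForm.idn φ ψ) E)
  | idnP2 (l : List Node) (E : Set (Label × SCIForm)) (w v u : Label) (φ ψ : SCIForm) :
      Node.bot ∉ l → posL w → Node.lf w (SCIForm.idn φ ψ) ∈ l → (w, SCIForm.idn φ ψ) ∉ E →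
      negL v → negL u → v ≠ u → freshL v l → freshL u l →
      Extend l E (l ++ [Node.lf v φ, Node.lf u ψ, Node.eq v u]) (insert (w, SCIForm.idn φ ψ) E)
  | idnN1 (l : List Node) (E : Set (Label × SCIForm)) (w v u : Label) (φ ψ : SCIForm) :
      Node.bot ∉ l → negL w → Node.lf w (SCIForm.idn φ ψ) ∈ l → (w, SCIForm.idn φ ψ) ∉ E →
      posL v → posL u → v ≠ u → freshL v l → freshL u l →
      Extend l E (l ++ [Node.lf v φ, Node.lf u ψ, Node.neq v u]) (insert (w, SCIForm.idn φ ψ) E)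
  | idnN2 (l : List Node) (E : Set (Label × SCIForm)) (w v u : Label) (φ ψ : SCIForm) :
      Node.bot ∉ l → negL w → Node.lf w (SCIForm.idn φ ψ) ∈ l → (w, SCIForm.idn φ ψ) ∉ E →
      posL v → negL u → v ≠ u → freshL v l → freshL u l →
      Extend l E (l ++ [Node.lf v φ, Node.lf u ψ]) (insert (w, SCIForm.idn φ ψ) E)
  | idnN3 (l : List Node) (E : Set (Label × SCIForm)) (w v u : Label) (φ ψ : SCIForm) :
      Node.bot ∉ l → negL w → Node.lf w (SCIForm.idn φ ψ) ∈ l → (w, SCIForm.idn φ ψ) ∉ E →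
      negL v → posL u → v ≠ u → freshL v l → freshL u l →
      Extend l E (l ++ [Node.lf v φ, Node.lf u ψ]) (insert (w, SCIForm.idn φ ψ) E)
  | idnN4 (l : List Node) (E : Set (Label × SCIForm)) (w v u : Label) (φ ψ : SCIForm) :
      Node.bot ∉ l → negL w → Node.lf w (SCIForm.idn φ ψ) ∈ l → (w, SCIForm.idn φ ψ) ∉ E →
      negL v → negL u → v ≠ u → freshL v l → freshL u l →
      Extend l E (l ++ [Node.lf v φ, Node.lf u ψ, Node.neq v u]) (insert (w, SCIForm.idn φ ψ) E)
  | eqNeg (l : List Node) (E : Set (Label × SCIForm)) (w v u y : Label) (φ ψ : SCIForm) :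
      Node.bot ∉ l → Node.lf w φ ∈ l → Node.lf v ψ ∈ l → Node.eq w v ∈ l →
      Node.lf u (SCIForm.not φ) ∈ l → Node.lf y (SCIForm.not ψ) ∈ l →
      Node.eq u y ∉ l →
      Extend l E (l ++ [Node.eq u y]) E
  | eqImp (l : List Node) (E : Set (Label × SCIForm)) (w v w' v' x z : Label) (φ ψ χ θ : SCIForm) :
      Node.bot ∉ l → Node.lf w φ ∈ l → Node.lf v ψ ∈ l → Node.eq w v ∈ l →
      Node.lf w' χ ∈ l → Node.lf v' θ ∈ l → Node.eq w' v' ∈ l →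
      Node.lf x (SCIForm.imp φ χ) ∈ l → Node.lf z (SCIForm.imp ψ θ) ∈ l →
      Node.eq x z ∉ l →
      Extend l E (l ++ [Node.eq x z]) E
  | eqIdn (l : List Node) (E : Set (Label × SCIForm)) (w v w' v' x z : Label) (φ ψ χ θ : SCIForm) :
      Node.bot ∉ l → Node.lf w φ ∈ l → Node.lf v ψ ∈ l → Node.eq w v ∈ l →
      Node.lf w' χ ∈ l → Node.lf v' θ ∈ l → Node.eq w' v' ∈ l →
      Node.lf x (SCIForm.idn φ χ) ∈ l → Node.lf z (SCIForm.idn ψ θ) ∈ l →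
      Node.eq x z ∉ l →
      Extend l E (l ++ [Node.eq x z]) E
  | ruleF (l : List Node) (E : Set (Label × SCIForm)) (w v : Label) (φ : SCIForm) :
      Node.bot ∉ l → Node.lf w φ ∈ l → Node.lf v φ ∈ l → Node.eq w v ∉ l →
      Extend l E (l ++ [Node.eq w v]) E
  | ruleSym (l : List Node) (E : Set (Label × SCIForm)) (w v : Label) :
      Node.bot ∉ l → Node.eq w v ∈ l → Node.eq v w ∉ l →
      Extend l E (l ++ [Node.eq v w]) E
  | ruleTran (l : List Node) (E : Set (Label × SCIForm)) (w v u : Label) :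
      Node.bot ∉ l → Node.eq w v ∈ l → Node.eq v u ∈ l → Node.eq w u ∉ l →
      Extend l E (l ++ [Node.eq w u]) E
  | bot1 (l : List Node) (E : Set (Label × SCIForm)) (w v : Label) :
      Node.bot ∉ l → Node.eq w v ∈ l → Node.neq w v ∈ l →
      Extend l E (l ++ [Node.bot]) E
  | bot2 (l : List Node) (E : Set (Label × SCIForm)) (w v : Label) :
      Node.bot ∉ l → posL w → negL v → Node.eq w v ∈ l →
      Extend l E (l ++ [Node.bot]) E

/-- `ClosedTab l E` holds iff there is a closed TC_SCI-tableau all of whose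
branches extend the branch `l` (with `E` the set of labelled formulas already
decomposed on `l`): either a closure rule applies to `l`, or some rule of
TC_SCI can be applied so that all resulting branches carry closed tableaux. -/
inductive ClosedTab : List Node → Set (Label × SCIForm) → Prop
  | clos1 (l : List Node) (E : Set (Label × SCIForm)) (w v : Label) :
      Node.eq w v ∈ l → Node.neq w v ∈ l → ClosedTab l E
  | clos2 (l : List Node) (E : Set (Label × SCIForm)) (w v : Label) :
      posL w → negL v → Node.eq w v ∈ l → ClosedTab l E
  | negP (l : List Node) (E : Set (Label × SCIForm)) (w v : Label) (φ : SCIForm) :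
      posL w → Node.lf w (SCIForm.not φ) ∈ l → (w, SCIForm.not φ) ∉ E →
      negL v → freshL v l →
      ClosedTab (l ++ [Node.lf v φ]) (insert (w, SCIForm.not φ) E) →
      ClosedTab l E
  | negN (l : List Node) (E : Set (Label × SCIForm)) (w v : Label) (φ : SCIForm) :
      negL w → Node.lf w (SCIForm.not φ) ∈ l → (w, SCIForm.not φ) ∉ E →
      posL v → freshL v l →
      ClosedTab (l ++ [Node.lf v φ]) (insert (w, SCIForm.not φ) E) →
      ClosedTab l E
  | impP (l : List Node) (E : Set (Label × SCIForm)) (w : Label) (φ ψ : SCIForm)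
      (v1 u1 v2 u2 v3 u3 : Label) :
      posL w → Node.lf w (SCIForm.imp φ ψ) ∈ l → (w, SCIForm.imp φ ψ) ∉ E →
      negL v1 → negL u1 → v1 ≠ u1 → freshL v1 l → freshL u1 l →
      negL v2 → posL u2 → v2 ≠ u2 → freshL v2 l → freshL u2 l →
      posL v3 → posL u3 → v3 ≠ u3 → freshL v3 l → freshL u3 l →
      ClosedTab (l ++ [Node.lf v1 φ, Node.lf u1 ψ]) (insert (w, SCIForm.imp φ ψ) E) →
      ClosedTab (l ++ [Node.lf v2 φ, Node.lf u2 ψ]) (insert (w, SCIForm.imp φ ψ) E) →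
      ClosedTab (l ++ [Node.lf v3 φ, Node.lf u3 ψ]) (insert (w, SCIForm.imp φ ψ) E) →
      ClosedTab l E
  | impN (l : List Node) (E : Set (Label × SCIForm)) (w v u : Label) (φ ψ : SCIForm) :
      negL w → Node.lf w (SCIForm.imp φ ψ) ∈ l → (w, SCIForm.imp φ ψ) ∉ E →
      posL v → negL u → v ≠ u → freshL v l → freshL u l →
      ClosedTab (l ++ [Node.lf v φ, Node.lf u ψ]) (insert (w, SCIForm.imp φ ψ) E) →
      ClosedTab l E
  | idnP (l : List Node) (E : Set (Label × SCIForm)) (w : Label) (φ ψ : SCIForm)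
      (v1 u1 v2 u2 : Label) :
      posL w → Node.lf w (SCIForm.idn φ ψ) ∈ l → (w, SCIForm.idn φ ψ) ∉ E →
      posL v1 → posL u1 → v1 ≠ u1 → freshL v1 l → freshL u1 l →
      negL v2 → negL u2 → v2 ≠ u2 → freshL v2 l → freshL u2 l →
      ClosedTab (l ++ [Node.lf v1 φ, Node.lf u1 ψ, Node.eq v1 u1]) (insert (w, SCIForm.idn φ ψ) E) →
      ClosedTab (l ++ [Node.lf v2 φ, Node.lf u2 ψ, Node.eq v2 u2]) (insert (w, SCIForm.idn φ ψ) E) →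
      ClosedTab l E
  | idnN (l : List Node) (E : Set (Label × SCIForm)) (w : Label) (φ ψ : SCIForm)
      (v1 u1 v2 u2 v3 u3 v4 u4 : Label) :
      negL w → Node.lf w (SCIForm.idn φ ψ) ∈ l → (w, SCIForm.idn φ ψ) ∉ E →
      posL v1 → posL u1 → v1 ≠ u1 → freshL v1 l → freshL u1 l →
      posL v2 → negL u2 → v2 ≠ u2 → freshL v2 l → freshL u2 l →
      negL v3 → posL u3 → v3 ≠ u3 → freshL v3 l → freshL u3 l →
      negL v4 → negL u4 → v4 ≠ u4 → freshL v4 l → freshL u4 l →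
      ClosedTab (l ++ [Node.lf v1 φ, Node.lf u1 ψ, Node.neq v1 u1]) (insert (w, SCIForm.idn φ ψ) E) →
      ClosedTab (l ++ [Node.lf v2 φ, Node.lf u2 ψ]) (insert (w, SCIForm.idn φ ψ) E) →
      ClosedTab (l ++ [Node.lf v3 φ, Node.lf u3 ψ]) (insert (w, SCIForm.idn φ ψ) E) →
      ClosedTab (l ++ [Node.lf v4 φ, Node.lf u4 ψ, Node.neq v4 u4]) (insert (w, SCIForm.idn φ ψ) E) →
      ClosedTab l E
  | eqNeg (l : List Node) (E : Set (Label × SCIForm)) (w v u y : Label) (φ ψ : SCIForm) :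
      Node.lf w φ ∈ l → Node.lf v ψ ∈ l → Node.eq w v ∈ l →
      Node.lf u (SCIForm.not φ) ∈ l → Node.lf y (SCIForm.not ψ) ∈ l →
      Node.eq u y ∉ l →
      ClosedTab (l ++ [Node.eq u y]) E → ClosedTab l E
  | eqImp (l : List Node) (E : Set (Label × SCIForm)) (w v w' v' x z : Label) (φ ψ χ θ : SCIForm) :
      Node.lf w φ ∈ l → Node.lf v ψ ∈ l → Node.eq w v ∈ l →
      Node.lf w' χ ∈ l → Node.lf v' θ ∈ l → Node.eq w' v' ∈ l →
      Node.lf x (SCIForm.imp φ χ) ∈ l → Node.lf z (SCIForm.imp ψ θ) ∈ l →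
      Node.eq x z ∉ l →
      ClosedTab (l ++ [Node.eq x z]) E → ClosedTab l E
  | eqIdn (l : List Node) (E : Set (Label × SCIForm)) (w v w' v' x z : Label) (φ ψ χ θ : SCIForm) :
      Node.lf w φ ∈ l → Node.lf v ψ ∈ l → Node.eq w v ∈ l →
      Node.lf w' χ ∈ l → Node.lf v' θ ∈ l → Node.eq w' v' ∈ l →
      Node.lf x (SCIForm.idn φ χ) ∈ l → Node.lf z (SCIForm.idn ψ θ) ∈ l →
      Node.eq x z ∉ l →
      ClosedTab (l ++ [Node.eq x z]) E → ClosedTab l E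
  | ruleF (l : List Node) (E : Set (Label × SCIForm)) (w v : Label) (φ : SCIForm) :
      Node.lf w φ ∈ l → Node.lf v φ ∈ l → Node.eq w v ∉ l →
      ClosedTab (l ++ [Node.eq w v]) E → ClosedTab l E
  | ruleSym (l : List Node) (E : Set (Label × SCIForm)) (w v : Label) :
      Node.eq w v ∈ l → Node.eq v w ∉ l →
      ClosedTab (l ++ [Node.eq v w]) E → ClosedTab l E
  | ruleTran (l : List Node) (E : Set (Label × SCIForm)) (w v u : Label) :
      Node.eq w v ∈ l → Node.eq v u ∈ l → Node.eq w u ∉ l →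
      ClosedTab (l ++ [Node.eq w u]) E → ClosedTab l E

/-! Every rule application lowers the potential
`[⊥ not on the branch] + (total size of the labelled formulas not yet decomposed)
  + (|φ|² - number of equalities on the branch)`:
a decomposition replaces a formula of size `k` by formulas with fresh labels of total size
`k - 1`, an equality rule adds a new equality and a closure rule adds `⊥`. The truncated
subtraction does no harm: weighing each decomposed formula `1` and every other one its size, the
total weight of the branch stays `|φ|`, so there are at most `|φ|` labels, and the equalities are
distinct pairs of labels. At the root the potential is `1 + |φ| + |φ|²`. -/

theorem SCIForm.one_le_size (φ : SCIForm) : 1 ≤ φ.size := by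
  cases φ <;> simp [SCIForm.size]

namespace Node

def lfPair? : Node → Option (Label × SCIForm)
  | lf v ψ => some (v, ψ)
  | _ => none

def eqPair? : Node → Option (Label × Label)
  | eq a b => some (a, b)
  | _ => none

end Node

namespace TCSCI

def lfPairs (l : List Node) : List (Label × SCIForm) := l.filterMap Node.lfPair?

def eqPairs (l : List Node) : List (Label × Label) := l.filterMap Node.eqPair?

def labels (l : List Node) : List Label := (lfPairs l).map Prod.fst

@[simp] theorem lfPairs_append (l m : List Node) : lfPairs (l ++ m) = lfPairs l ++ lfPairs m :=
  List.filterMap_append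

@[simp] theorem eqPairs_append (l m : List Node) : eqPairs (l ++ m) = eqPairs l ++ eqPairs m :=
  List.filterMap_append

@[simp] theorem labels_append (l m : List Node) : labels (l ++ m) = labels l ++ labels m := by
  simp [labels]

theorem mem_lfPairs {l : List Node} {p : Label × SCIForm} :
    p ∈ lfPairs l ↔ Node.lf p.1 p.2 ∈ l := by
  constructor
  · intro hp
    obtain ⟨n, hn, hnp⟩ := List.mem_filterMap.mp hp
    cases n <;> simp only [Node.lfPair?, reduceCtorEq, Option.some.injEq] at hnp
    exact hnp ▸ hn
  · intro hp
    exact List.mem_filterMap.mpr ⟨_, hp, rfl⟩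

theorem mem_eqPairs {l : List Node} {a b : Label} : (a, b) ∈ eqPairs l ↔ Node.eq a b ∈ l := by
  constructor
  · intro hp
    obtain ⟨n, hn, hnp⟩ := List.mem_filterMap.mp hp
    cases n <;> simp_all [Node.eqPair?]
  · intro hp
    exact List.mem_filterMap.mpr ⟨_, hp, rfl⟩

theorem mem_labels {l : List Node} {v : Label} : v ∈ labels l ↔ ∃ ψ, Node.lf v ψ ∈ l := by
  simp [labels, mem_lfPairs]

theorem freshL_iff {v : Label} {l : List Node} : freshL v l ↔ v ∉ labels l := by
  simp [freshL, mem_labels]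

structure WellFormed (l : List Node) (E : Set (Label × SCIForm)) : Prop where
  lfPairs_nodup : (lfPairs l).Nodup
  decomposed_subset : ∀ p ∈ E, p ∈ lfPairs l
  eq_mem_labels : ∀ a b, Node.eq a b ∈ l → a ∈ labels l ∧ b ∈ labels l
  eqPairs_nodup : (eqPairs l).Nodup

theorem WellFormed.append {l new : List Node} {E E' : Set (Label × SCIForm)} (hI : WellFormed l E)
    (hnd : (lfPairs new).Nodup) (hdisj : ∀ p ∈ lfPairs new, p ∉ lfPairs l)
    (heq : ∀ a b, Node.eq a b ∈ new → a ∈ labels (l ++ new) ∧ b ∈ labels (l ++ new))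
    (heqnd : (eqPairs new).Nodup) (heqdisj : ∀ p ∈ eqPairs new, p ∉ eqPairs l)
    (hE' : ∀ p ∈ E', p ∈ lfPairs l) : WellFormed (l ++ new) E' where
  lfPairs_nodup := by
    rw [lfPairs_append]
    exact hI.lfPairs_nodup.append hnd fun p hl hn => hdisj p hn hl
  decomposed_subset p hp := by
    rw [lfPairs_append]
    exact List.mem_append_left _ (hE' p hp)
  eq_mem_labels a b hab := by
    rcases List.mem_append.mp hab with hab | hab
    · obtain ⟨ha, hb⟩ := hI.eq_mem_labels a b hab
      simp [ha, hb]
    · exact heq a b hab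
  eqPairs_nodup := by
    rw [eqPairs_append]
    exact hI.eqPairs_nodup.append heqnd fun p hl hn => heqdisj p hn hl

open Classical in
noncomputable def weight (c : ℕ) (E : Set (Label × SCIForm)) (p : Label × SCIForm) : ℕ :=
  if p ∈ E then c else p.2.size

theorem weight_insert_of_ne {c : ℕ} {E : Set (Label × SCIForm)} {p q : Label × SCIForm}
    (hqp : q ≠ p) : weight c (insert p E) q = weight c E q := by
  by_cases hq : q ∈ E <;> simp [weight, hq, hqp]

theorem sum_weight_of_forall_not_mem (c : ℕ) {E : Set (Label × SCIForm)}
    {L : List (Label × SCIForm)} (hL : ∀ p ∈ L, p ∉ E) :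
    (L.map (weight c E)).sum = (L.map fun p => p.2.size).sum := by
  congr 1
  exact List.map_congr_left fun p hp => by simp [weight, hL p hp]

theorem sum_weight_insert (c : ℕ) {E : Set (Label × SCIForm)} {L : List (Label × SCIForm)}
    {p : Label × SCIForm} (hnd : L.Nodup) (hp : p ∈ L) (hpE : p ∉ E) :
    (L.map (weight c (insert p E))).sum + p.2.size = (L.map (weight c E)).sum + c := by
  obtain ⟨L₁, L₂, rfl⟩ := List.append_of_mem hp
  have hL₁ : ∀ q ∈ L₁, q ≠ p := fun q hq hqp =>
    (List.nodup_append.mp hnd).2.2 q hq p List.mem_cons_self hqp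
  have hL₂ : ∀ q ∈ L₂, q ≠ p := fun q hq hqp =>
    (List.nodup_cons.mp (List.nodup_append.mp hnd).2.1).1 (hqp ▸ hq)
  have hrest : ∀ L' : List (Label × SCIForm), (∀ q ∈ L', q ≠ p) →
      L'.map (weight c (insert p E)) = L'.map (weight c E) := fun L' hL' =>
    List.map_congr_left fun q hq => weight_insert_of_ne (hL' q hq)
  simp only [List.map_append, List.map_cons, List.sum_append, List.sum_cons, hrest L₁ hL₁,
    hrest L₂ hL₂]
  simp [weight, hpE]
  omega

noncomputable def mass (E : Set (Label × SCIForm)) (l : List Node) : ℕ :=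
  ((lfPairs l).map (weight 1 E)).sum

noncomputable def pending (E : Set (Label × SCIForm)) (l : List Node) : ℕ :=
  ((lfPairs l).map (weight 0 E)).sum

noncomputable def potential (s : ℕ) (l : List Node) (E : Set (Label × SCIForm)) : ℕ :=
  (if Node.bot ∈ l then 0 else 1) + pending E l + (s ^ 2 - (eqPairs l).length)

theorem length_labels_le_mass (l : List Node) (E : Set (Label × SCIForm)) :
    (labels l).length ≤ mass E l := by
  rw [labels, List.length_map, mass, ← List.length_map (f := weight 1 E)]
  refine List.length_le_sum_of_one_le _ fun i hi => ?_
  obtain ⟨p, -, rfl⟩ := List.mem_map.mp hi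
  unfold weight
  split_ifs
  · rfl
  · exact p.2.one_le_size

theorem WellFormed.length_eqPairs_le {l : List Node} {E : Set (Label × SCIForm)}
    (hI : WellFormed l E) : (eqPairs l).length ≤ mass E l ^ 2 := by
  classical
  have hsub : (eqPairs l).toFinset ⊆ (labels l).toFinset ×ˢ (labels l).toFinset := by
    rintro ⟨a, b⟩ hab
    simpa using hI.eq_mem_labels a b (mem_eqPairs.mp (List.mem_toFinset.mp hab))
  calc (eqPairs l).length = (eqPairs l).toFinset.card :=
        (List.toFinset_card_of_nodup hI.eqPairs_nodup).symm
    _ ≤ (labels l).toFinset.card * (labels l).toFinset.card := by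
        simpa using Finset.card_le_card hsub
    _ ≤ mass E l ^ 2 := by
        rw [sq]
        have := (List.toFinset_card_le (labels l)).trans (length_labels_le_mass l E)
        exact Nat.mul_le_mul this this

section Root

variable (w : Label) (φ : SCIForm)

theorem wellFormed_root : WellFormed [Node.lf w φ] ∅ where
  lfPairs_nodup := List.nodup_singleton _
  decomposed_subset := by simp
  eq_mem_labels := by simp
  eqPairs_nodup := List.nodup_nil

theorem mass_root : mass ∅ [Node.lf w φ] = φ.size := by
  simp [mass, lfPairs, Node.lfPair?, weight]

theorem potential_root (s : ℕ) : potential s [Node.lf w φ] ∅ = 1 + φ.size + s ^ 2 := by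
  simp [potential, pending, lfPairs, eqPairs, Node.lfPair?, Node.eqPair?, List.filterMap_cons,
    weight]

end Root

section Steps

variable {l : List Node} {E : Set (Label × SCIForm)}

theorem WellFormed.decompose_step {new : List Node} {w : Label} {ψ : SCIForm}
    (hI : WellFormed l E) (hb : Node.bot ∉ l) (hw : Node.lf w ψ ∈ l) (hE : (w, ψ) ∉ E)
    (hbnew : Node.bot ∉ new) (hnd : (labels new).Nodup)
    (hfresh : ∀ v ∈ labels new, freshL v l)
    (hsize : ((lfPairs new).map fun p => p.2.size).sum + 1 = ψ.size)
    (heq : ∀ a b, Node.eq a b ∈ new → a ∈ labels new ∧ b ∈ labels new)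
    (heqnd : (eqPairs new).Nodup) (s : ℕ) :
    (WellFormed (l ++ new) (insert (w, ψ) E) ∧ mass (insert (w, ψ) E) (l ++ new) = mass E l) ∧
      potential s (l ++ new) (insert (w, ψ) E) < potential s l E := by
  have hwl : w ∈ labels l := mem_labels.mpr ⟨ψ, hw⟩
  have hnew : ∀ p ∈ lfPairs new, p ∉ lfPairs l ∧ p ∉ insert (w, ψ) E := by
    intro p hp
    have hpl : p.1 ∉ labels l := freshL_iff.mp (hfresh p.1 (List.mem_map_of_mem hp))
    have hpl' : p ∉ lfPairs l := fun h => hpl (List.mem_map_of_mem h)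
    refine ⟨hpl', ?_⟩
    rintro (rfl | hpE)
    · exact hpl hwl
    · exact hpl' (hI.decomposed_subset p hpE)
  have hI' : WellFormed (l ++ new) (insert (w, ψ) E) := by
    refine hI.append (hnd.of_map Prod.fst) (fun p hp => (hnew p hp).1) (fun a b hab => ?_) heqnd
      ?_ ?_
    · obtain ⟨hva, hvb⟩ := heq a b hab
      simp [hva, hvb]
    · rintro ⟨a, b⟩ hab hab'
      exact freshL_iff.mp (hfresh a (heq a b (mem_eqPairs.mp hab)).1)
        (hI.eq_mem_labels a b (mem_eqPairs.mp hab')).1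
    · rintro p (rfl | hp)
      · exact mem_lfPairs.mpr hw
      · exact hI.decomposed_subset p hp
  have hmass := sum_weight_insert 1 hI.lfPairs_nodup (mem_lfPairs.mpr hw) hE
  have hpending := sum_weight_insert 0 hI.lfPairs_nodup (mem_lfPairs.mpr hw) hE
  dsimp only at hmass hpending
  have hnewsum := fun c => sum_weight_of_forall_not_mem c (fun p hp => (hnew p hp).2)
  have hb' : Node.bot ∉ l ++ new := by simp [hb, hbnew]
  refine ⟨⟨hI', ?_⟩, ?_⟩
  · simp only [mass, lfPairs_append, List.map_append, List.sum_append, hnewsum]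
    omega
  · simp only [potential, pending, if_neg hb, if_neg hb', lfPairs_append, List.map_append,
      List.sum_append, hnewsum, eqPairs_append, List.length_append]
    omega

theorem WellFormed.equality_step {x y : Label} (hI : WellFormed l E) (hb : Node.bot ∉ l)
    (hx : x ∈ labels l) (hy : y ∈ labels l) (hxy : Node.eq x y ∉ l) :
    (WellFormed (l ++ [Node.eq x y]) E ∧ mass E (l ++ [Node.eq x y]) = mass E l) ∧
      potential (mass E l) (l ++ [Node.eq x y]) E < potential (mass E l) l E := by
  have hlf : lfPairs [Node.eq x y] = [] := rfl
  have heqs : eqPairs [Node.eq x y] = [(x, y)] := rfl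
  have hI' : WellFormed (l ++ [Node.eq x y]) E := by
    refine hI.append (by simp [hlf]) (by simp [hlf]) (fun a b hab => ?_) (by simp [heqs])
      (by simpa [heqs, mem_eqPairs] using hxy) hI.decomposed_subset
    obtain ⟨rfl, rfl⟩ : a = x ∧ b = y := by simpa using hab
    simp [hx, hy]
  have hmass : mass E (l ++ [Node.eq x y]) = mass E l := by simp [mass, hlf]
  have hlen := hI'.length_eqPairs_le
  have hb' : Node.bot ∉ l ++ [Node.eq x y] := by simp [hb]
  refine ⟨⟨hI', hmass⟩, ?_⟩
  rw [hmass, eqPairs_append, heqs, List.length_append, List.length_singleton] at hlen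
  simp only [potential, pending, if_neg hb, if_neg hb', lfPairs_append, hlf, List.append_nil,
    eqPairs_append, heqs, List.length_append, List.length_singleton]
  omega

theorem WellFormed.closure_step (hI : WellFormed l E) (hb : Node.bot ∉ l) (s : ℕ) :
    (WellFormed (l ++ [Node.bot]) E ∧ mass E (l ++ [Node.bot]) = mass E l) ∧
      potential s (l ++ [Node.bot]) E < potential s l E := by
  have hlf : lfPairs [Node.bot] = [] := rfl
  have heqs : eqPairs [Node.bot] = [] := rfl
  refine ⟨⟨hI.append (by simp [hlf]) (by simp [hlf]) (by simp) (by simp [heqs]) (by simp [heqs])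
    hI.decomposed_subset, by simp [mass, hlf]⟩, ?_⟩
  simp [potential, pending, hb, hlf, heqs]

theorem Extend.step {l' : List Node} {E' : Set (Label × SCIForm)} {s : ℕ}
    (hx : Extend l E l' E') (hI : WellFormed l E) (hs : mass E l = s) :
    (WellFormed l' E' ∧ mass E' l' = s) ∧ potential s l' E' < potential s l E := by
  subst hs
  cases hx with
  | negP w v φ hb _ hw hE _ hv | negN w v φ hb _ hw hE _ hv =>
    refine hI.decompose_step hb hw hE ?_ ?_ ?_ ?_ ?_ ?_ _ <;>
      simp_all [labels, lfPairs, eqPairs, Node.lfPair?, Node.eqPair?, List.filterMap_cons,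
        SCIForm.size]
  | impP1 w v u φ ψ hb _ hw hE _ _ hvu hv hu | impP2 w v u φ ψ hb _ hw hE _ _ hvu hv hu
  | impP3 w v u φ ψ hb _ hw hE _ _ hvu hv hu | impN w v u φ ψ hb _ hw hE _ _ hvu hv hu
  | idnP1 w v u φ ψ hb _ hw hE _ _ hvu hv hu | idnP2 w v u φ ψ hb _ hw hE _ _ hvu hv hu
  | idnN1 w v u φ ψ hb _ hw hE _ _ hvu hv hu | idnN2 w v u φ ψ hb _ hw hE _ _ hvu hv hu
  | idnN3 w v u φ ψ hb _ hw hE _ _ hvu hv hu | idnN4 w v u φ ψ hb _ hw hE _ _ hvu hv hu =>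
    refine hI.decompose_step hb hw hE ?_ ?_ ?_ ?_ ?_ ?_ _ <;>
      simp_all [labels, lfPairs, eqPairs, Node.lfPair?, Node.eqPair?, List.filterMap_cons,
        SCIForm.size]
  | eqNeg _ _ x y _ _ hb _ _ _ hx hy hxy | eqImp _ _ _ _ x y _ _ _ _ hb _ _ _ _ _ _ hx hy hxy
  | eqIdn _ _ _ _ x y _ _ _ _ hb _ _ _ _ _ _ hx hy hxy | ruleF x y _ hb hx hy hxy =>
    exact hI.equality_step hb (mem_labels.mpr ⟨_, hx⟩) (mem_labels.mpr ⟨_, hy⟩) hxy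
  | ruleSym x y hb hxy hyx =>
    obtain ⟨hx, hy⟩ := hI.eq_mem_labels x y hxy
    exact hI.equality_step hb hy hx hyx
  | ruleTran x y z hb hxy hyz hxz =>
    exact hI.equality_step hb (hI.eq_mem_labels x y hxy).1 (hI.eq_mem_labels y z hyz).2 hxz
  | bot1 _ _ hb _ _ | bot2 _ _ hb _ _ _ => exact hI.closure_step hb _

end Steps

end TCSCI

theorem length_le_of_chain {α : Type*} {R : α → α → Prop} {P : α → Prop} (μ : α → ℕ)
    (hR : ∀ a b, P a → R a b → P b ∧ μ b < μ a) {f : ℕ → α} {n : ℕ}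
    (hf : ∀ i < n, R (f i) (f (i + 1))) (h0 : P (f 0)) : n ≤ μ (f 0) := by
  suffices ∀ i ≤ n, P (f i) ∧ μ (f i) + i ≤ μ (f 0) by
    exact (this n le_rfl).2.trans' (by omega)
  intro i
  induction i with
  | zero => exact fun _ => ⟨h0, le_rfl⟩
  | succ i ih =>
    intro hi
    obtain ⟨hP, hμ⟩ := ih (by omega)
    obtain ⟨hP', hlt⟩ := hR _ _ hP (hf i hi)
    exact ⟨hP', by omega⟩

open TCSCI in
/-- termination of TC_SCI.  On any branch of a TC_SCI-tableau with
w : φ at the root (formalized as a finite sequence of branch states, each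
obtained from the previous one by a single rule application), rules are applied
at most |φ| + |φ|² + 1 times; consequently every TC_SCI-tableau for φ is
finite. -/
theorem stmt_14 (φ : SCIForm) (w : Label) (n : ℕ)
    (g : ℕ → List Node) (h : ℕ → Set (Label × SCIForm))
    (hg0 : g 0 = [Node.lf w φ]) (hh0 : h 0 = ∅)
    (hchain : ∀ i < n, Extend (g i) (h i) (g (i + 1)) (h (i + 1))) :
    n ≤ SCIForm.size φ + SCIForm.size φ ^ 2 + 1 := by
  have hroot : potential φ.size (g 0) (h 0) = φ.size + φ.size ^ 2 + 1 := by
    rw [hg0, hh0, potential_root]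
    ring
  rw [← hroot]
  refine length_le_of_chain (R := fun a b => Extend a.1 a.2 b.1 b.2)
    (P := fun a => WellFormed a.1 a.2 ∧ mass a.2 a.1 = φ.size)
    (fun a => potential φ.size a.1 a.2)
    (fun a b ha hab => hab.step ha.1 ha.2) (f := fun i => (g i, h i)) hchain ?_
  rw [hg0, hh0]
  exact ⟨wellFormed_root w φ, mass_root w φ⟩
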